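/- arXiv:math/9812121 — 2 statements merged into one kernel-verified Lean document; each statement's English description precedes it below -/
import Mathlib

section
/- There is no nonzero Heisenberg-invariant quadric in 7 variables: the only homogeneous polynomial q ∈ ℂ[x₀, …, x₆] of degree 2 that is invariant under both the cyclic substitution x_j ↦ x_{j+1} (indices modulo 7) and the diagonal substitution x_j ↦ ε^j x_j is q = 0. -/
noncomputable section

open MvPolynomial

/-- `ε = exp(2πi/7)`. -/
noncomputable def ε : ℂ := Complex.exp (2 * Real.pi * Complex.I / 7)

/-!
A monomial `x^d` is rescaled by the diagonal substitution by `ε ^ w(d)`, where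
`w(d) = ∑ j d_j · j ∈ ℤ/7`, so an invariant polynomial only has monomials of weight `0`.
The cyclic shift sends `x^d` to a monomial of weight `w(d) + deg d`, and invariance under it keeps
that monomial in the support; hence `deg d ≡ 0 mod 7`, which fails for `deg d = 2`.
-/

open Finsupp

theorem Finsupp.weight_mapDomain_add_right {M : Type*} [AddCommMonoid M] (a : M)
    (d : M →₀ ℕ) : weight id (d.mapDomain (· + a)) = weight id d + degree d • a := by
  rw [weight_apply, sum_mapDomain_index (h := fun i c => c • id i) (fun _ => zero_smul ℕ _)
    (fun _ _ _ => add_smul ..), weight_apply, degree_apply, Finset.sum_smul, Finsupp.sum,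
    Finsupp.sum, ← Finset.sum_add_distrib]
  simp only [id, smul_add]

theorem ZMod.natCast_weight_val {n : ℕ} [NeZero n] (d : ZMod n →₀ ℕ) :
    (weight ZMod.val d : ZMod n) = weight id d := by
  simp only [weight_apply, Finsupp.sum, Nat.cast_sum, nsmul_eq_mul, Nat.cast_mul,
    ZMod.natCast_zmod_val, Nat.cast_id, id]

namespace MvPolynomial

variable {σ R : Type*} [CommSemiring R]

theorem coeff_aeval_smul_X (c : σ → R) (p : MvPolynomial σ R) (d : σ →₀ ℕ) :
    coeff d (aeval (fun j => c j • X j) p) = (d.prod fun j e => c j ^ e) * coeff d p := by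
  induction p using MvPolynomial.induction_on' with
  | add p r hp hr => rw [map_add, coeff_add, hp, hr, coeff_add, mul_add]
  | monomial s a =>
    classical
    have hmonomial : aeval (fun j => c j • X j) (monomial s a) =
        C (s.prod fun j e => c j ^ e) * monomial s a := by
      rw [aeval_monomial, monomial_eq, algebraMap_eq]
      simp only [smul_eq_C_mul, mul_pow, ← map_pow, Finsupp.prod, Finset.prod_mul_distrib,
        map_prod]
      ring
    rw [hmonomial, coeff_C_mul, coeff_monomial]
    split_ifs with h
    · rw [h]
    · rw [mul_zero, mul_zero]

theorem prod_pow_eq_one_of_aeval_smul_X_eq_self [IsRightCancelMulZero R] {c : σ → R}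
    {p : MvPolynomial σ R} (hp : aeval (fun j => c j • X j) p = p) {d : σ →₀ ℕ}
    (hd : coeff d p ≠ 0) : (d.prod fun j e => c j ^ e) = 1 := by
  have hcoeff := coeff_aeval_smul_X c p d
  rw [hp] at hcoeff
  exact mul_right_cancel₀ hd (by rw [one_mul, ← hcoeff])

end MvPolynomial

theorem IsPrimitiveRoot.prod_pow_val_eq_one_iff {M : Type*} [CommMonoid M] {n : ℕ} [NeZero n]
    {ζ : M} (hζ : IsPrimitiveRoot ζ n) (d : ZMod n →₀ ℕ) :
    (d.prod fun j e => (ζ ^ j.val) ^ e) = 1 ↔ weight id d = 0 := by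
  have hpow : (d.prod fun j e => (ζ ^ j.val) ^ e) = ζ ^ weight ZMod.val d := by
    simp only [Finsupp.prod, weight_apply, Finsupp.sum, ← pow_mul, Finset.prod_pow_eq_pow_sum,
      smul_eq_mul, mul_comm]
  rw [hpow, hζ.pow_eq_one_iff_dvd, ← ZMod.natCast_eq_zero_iff, ZMod.natCast_weight_val]

namespace MvPolynomial

variable {K : Type*} [CommRing K] [IsDomain K] {n : ℕ} [NeZero n]

theorem weight_eq_zero_of_coeff_ne_zero {ζ : K} (hζ : IsPrimitiveRoot ζ n)
    {p : MvPolynomial (ZMod n) K} (hp : aeval (fun j : ZMod n => ζ ^ j.val • X j) p = p)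
    {d : ZMod n →₀ ℕ} (hd : coeff d p ≠ 0) : weight id d = 0 :=
  (hζ.prod_pow_val_eq_one_iff d).mp (prod_pow_eq_one_of_aeval_smul_X_eq_self hp hd)

theorem eq_zero_of_isHomogeneous_of_heisenberg_invariant {ζ : K} (hζ : IsPrimitiveRoot ζ n)
    {k : ℕ} (hk : (k : ZMod n) ≠ 0) {p : MvPolynomial (ZMod n) K} (hp : p.IsHomogeneous k)
    (hcyc : rename (· + 1) p = p) (hdiag : aeval (fun j : ZMod n => ζ ^ j.val • X j) p = p) :
    p = 0 := by
  ext d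
  by_contra hd
  have hdeg : degree d = k := by rw [degree_eq_weight_one]; exact hp hd
  have hshift : coeff (d.mapDomain (· + 1)) p ≠ 0 := by
    rwa [← hcyc, coeff_rename_mapDomain _ (add_left_injective 1)]
  have hweight := weight_eq_zero_of_coeff_ne_zero hζ hdiag hshift
  rw [weight_mapDomain_add_right, weight_eq_zero_of_coeff_ne_zero hζ hdiag hd, hdeg,
    zero_add, nsmul_one] at hweight
  exact hk hweight

end MvPolynomial

theorem isPrimitiveRoot_ε : IsPrimitiveRoot ε 7 := by
  simpa [ε] using Complex.isPrimitiveRoot_exp 7 (by norm_num)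

/-- the only homogeneous polynomial of degree 2 in
ℂ[x₀,…,x₆] invariant under the cyclic substitution x_j ↦ x_{j+1} and the
diagonal substitution x_j ↦ ε^j x_j is 0. -/
theorem no_heisenberg_invariant_quadric (q : MvPolynomial (ZMod 7) ℂ)
    (hq : q.IsHomogeneous 2)
    (hcyc : MvPolynomial.rename (fun j : ZMod 7 => j + 1) q = q)
    (hdiag : MvPolynomial.aeval
        (fun j : ZMod 7 => (ε ^ j.val) • (MvPolynomial.X j : MvPolynomial (ZMod 7) ℂ)) q = q) :
    q = 0 :=
  eq_zero_of_isHomogeneous_of_heisenberg_invariant isPrimitiveRoot_ε (k := 2) (by decide) hq hcyc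
    hdiag

end
end

section
/- The ideal J contains every homogeneous polynomial of degree 3 (equivalently, (u₀, u₁, u₂, u₃)³ ⊆ J), and the quotient ring S/J is an 8-dimensional ℂ-vector space, with Hilbert function (1, 4, 3, 0, 0, …). -/
noncomputable section

open MvPolynomial

noncomputable def f₀ : MvPolynomial (Fin 4) ℂ := X 0 ^ 2
noncomputable def f₁ : MvPolynomial (Fin 4) ℂ := X 2 * X 3
noncomputable def f₂ : MvPolynomial (Fin 4) ℂ := X 3 * X 1
noncomputable def f₃ : MvPolynomial (Fin 4) ℂ := X 1 * X 2
noncomputable def f₄ : MvPolynomial (Fin 4) ℂ := X 0 * X 3 + X 1 ^ 2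
noncomputable def f₅ : MvPolynomial (Fin 4) ℂ := X 0 * X 1 + X 2 ^ 2
noncomputable def f₆ : MvPolynomial (Fin 4) ℂ := X 0 * X 2 + X 3 ^ 2

/-- The ideal J generated by the seven quadrics. -/
noncomputable def J : Ideal (MvPolynomial (Fin 4) ℂ) :=
  Ideal.span {f₀, f₁, f₂, f₃, f₄, f₅, f₆}

/-- The degree-n part of the quotient S/J, as the image of the space of
homogeneous polynomials of degree n. -/
noncomputable def quotPart (n : ℕ) :
    Submodule ℂ (MvPolynomial (Fin 4) ℂ ⧸ J) :=
  Submodule.map (Ideal.Quotient.mkₐ ℂ J).toLinearMap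
    (homogeneousSubmodule (Fin 4) ℂ n)



lemma hJ0 : f₀ ∈ J := Ideal.subset_span (by simp)
lemma hJ1 : f₁ ∈ J := Ideal.subset_span (by simp)
lemma hJ2 : f₂ ∈ J := Ideal.subset_span (by simp)
lemma hJ3 : f₃ ∈ J := Ideal.subset_span (by simp)
lemma hJ4 : f₄ ∈ J := Ideal.subset_span (by simp)
lemma hJ5 : f₅ ∈ J := Ideal.subset_span (by simp)
lemma hJ6 : f₆ ∈ J := Ideal.subset_span (by simp)

lemma memJ_of_eq {p q : MvPolynomial (Fin 4) ℂ} (h : p = q) (hq : q ∈ J) : p ∈ J := h ▸ hq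

lemma cube1 : (X 1 : MvPolynomial (Fin 4) ℂ) ^ 3 ∈ J :=
  memJ_of_eq (q := X 1 * f₄ - X 0 * f₂) (by unfold f₄ f₂; ring1)
    (sub_mem (J.mul_mem_left _ hJ4) (J.mul_mem_left _ hJ2))
lemma cube2 : (X 2 : MvPolynomial (Fin 4) ℂ) ^ 3 ∈ J :=
  memJ_of_eq (q := X 2 * f₅ - X 0 * f₃) (by unfold f₅ f₃; ring1)
    (sub_mem (J.mul_mem_left _ hJ5) (J.mul_mem_left _ hJ3))
lemma cube3 : (X 3 : MvPolynomial (Fin 4) ℂ) ^ 3 ∈ J :=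
  memJ_of_eq (q := X 3 * f₆ - X 0 * f₁) (by unfold f₆ f₁; ring1)
    (sub_mem (J.mul_mem_left _ hJ6) (J.mul_mem_left _ hJ1))
lemma sq1 : (X 0 * X 1 ^ 2 : MvPolynomial (Fin 4) ℂ) ∈ J :=
  memJ_of_eq (q := X 0 * f₄ - X 3 * f₀) (by unfold f₄ f₀; ring1)
    (sub_mem (J.mul_mem_left _ hJ4) (J.mul_mem_left _ hJ0))
lemma sq2 : (X 0 * X 2 ^ 2 : MvPolynomial (Fin 4) ℂ) ∈ J :=
  memJ_of_eq (q := X 0 * f₅ - X 1 * f₀) (by unfold f₅ f₀; ring1)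
    (sub_mem (J.mul_mem_left _ hJ5) (J.mul_mem_left _ hJ0))
lemma sq3 : (X 0 * X 3 ^ 2 : MvPolynomial (Fin 4) ℂ) ∈ J :=
  memJ_of_eq (q := X 0 * f₆ - X 2 * f₀) (by unfold f₆ f₀; ring1)
    (sub_mem (J.mul_mem_left _ hJ6) (J.mul_mem_left _ hJ0))

lemma monomial_deg3_mem (e : Fin 4 →₀ ℕ) (h : e 0 + e 1 + e 2 + e 3 = 3) :
    (monomial e (1:ℂ)) ∈ J := by
  have hm : (monomial e (1:ℂ)) = X 0 ^ e 0 * X 1 ^ e 1 * X 2 ^ e 2 * X 3 ^ e 3 := by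
    rw [monomial_eq, Finsupp.prod_fintype _ _ (fun i => pow_zero _), Fin.prod_univ_four]
    simp
  rw [hm]
  set a := e 0; set b := e 1; set c := e 2; set d := e 3
  clear_value a b c d
  have ha : a ≤ 3 := by omega
  have hb : b ≤ 3 := by omega
  have hc : c ≤ 3 := by omega
  have hd : d ≤ 3 := by omega
  interval_cases a <;> interval_cases b <;> interval_cases c <;> interval_cases d <;>
    first
    | omega
    | (refine memJ_of_eq ?_ (J.mul_mem_left (X 0) hJ0); simp only [f₀,f₁,f₂,f₃]; ring1)
    | (refine memJ_of_eq ?_ (J.mul_mem_left (X 1) hJ0); simp only [f₀,f₁,f₂,f₃]; ring1)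
    | (refine memJ_of_eq ?_ (J.mul_mem_left (X 2) hJ0); simp only [f₀,f₁,f₂,f₃]; ring1)
    | (refine memJ_of_eq ?_ (J.mul_mem_left (X 3) hJ0); simp only [f₀,f₁,f₂,f₃]; ring1)
    | (refine memJ_of_eq ?_ (J.mul_mem_left (X 1) hJ1); simp only [f₀,f₁,f₂,f₃]; ring1)
    | (refine memJ_of_eq ?_ (J.mul_mem_left (X 0) hJ1); simp only [f₀,f₁,f₂,f₃]; ring1)
    | (refine memJ_of_eq ?_ (J.mul_mem_left (X 2) hJ1); simp only [f₀,f₁,f₂,f₃]; ring1)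
    | (refine memJ_of_eq ?_ (J.mul_mem_left (X 3) hJ1); simp only [f₀,f₁,f₂,f₃]; ring1)
    | (refine memJ_of_eq ?_ (J.mul_mem_left (X 0) hJ2); simp only [f₀,f₁,f₂,f₃]; ring1)
    | (refine memJ_of_eq ?_ (J.mul_mem_left (X 1) hJ2); simp only [f₀,f₁,f₂,f₃]; ring1)
    | (refine memJ_of_eq ?_ (J.mul_mem_left (X 3) hJ2); simp only [f₀,f₁,f₂,f₃]; ring1)
    | (refine memJ_of_eq ?_ (J.mul_mem_left (X 0) hJ3); simp only [f₀,f₁,f₂,f₃]; ring1)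
    | (refine memJ_of_eq ?_ (J.mul_mem_left (X 1) hJ3); simp only [f₀,f₁,f₂,f₃]; ring1)
    | (refine memJ_of_eq ?_ (J.mul_mem_left (X 2) hJ3); simp only [f₀,f₁,f₂,f₃]; ring1)
    | (refine memJ_of_eq ?_ cube1; ring1)
    | (refine memJ_of_eq ?_ cube2; ring1)
    | (refine memJ_of_eq ?_ cube3; ring1)
    | (refine memJ_of_eq ?_ sq1; ring1)
    | (refine memJ_of_eq ?_ sq2; ring1)
    | (refine memJ_of_eq ?_ sq3; ring1)

lemma X_mul_monomial' (i : Fin 4) (e : Fin 4 →₀ ℕ) (hi : e i ≠ 0) (c : ℂ) :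
    X i * monomial (e - Finsupp.single i 1) c = monomial e c := by
  rw [X, monomial_mul, one_mul]
  have : Finsupp.single i 1 + (e - Finsupp.single i 1) = e := by
    ext j
    simp only [Finsupp.add_apply, Finsupp.tsub_apply, Finsupp.single_apply]
    split_ifs with h
    · subst h; omega
    · omega
  rw [this]

lemma monomial_mem_J (c : ℂ) (e : Fin 4 →₀ ℕ) (h : 3 ≤ e 0 + e 1 + e 2 + e 3) :
    (monomial e c) ∈ J := by
  have key : ∀ n (e : Fin 4 →₀ ℕ), e 0 + e 1 + e 2 + e 3 = n + 3 → (monomial e (1:ℂ)) ∈ J := by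
    intro n
    induction n with
    | zero => intro e he; exact monomial_deg3_mem e he
    | succ n ih =>
      intro e he
      have hex : e 0 ≠ 0 ∨ e 1 ≠ 0 ∨ e 2 ≠ 0 ∨ e 3 ≠ 0 := by omega
      obtain hi | hi | hi | hi := hex
      · exact X_mul_monomial' 0 e hi 1 ▸ J.mul_mem_left _ (ih _ (by
          simp (config := { decide := true }) only [Finsupp.tsub_apply, Finsupp.single_apply, if_true, if_false]
          omega))
      · exact X_mul_monomial' 1 e hi 1 ▸ J.mul_mem_left _ (ih _ (by
          simp (config := { decide := true }) only [Finsupp.tsub_apply, Finsupp.single_apply, if_true, if_false]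
          omega))
      · exact X_mul_monomial' 2 e hi 1 ▸ J.mul_mem_left _ (ih _ (by
          simp (config := { decide := true }) only [Finsupp.tsub_apply, Finsupp.single_apply, if_true, if_false]
          omega))
      · exact X_mul_monomial' 3 e hi 1 ▸ J.mul_mem_left _ (ih _ (by
          simp (config := { decide := true }) only [Finsupp.tsub_apply, Finsupp.single_apply, if_true, if_false]
          omega))
  have : monomial e c = C c * monomial e 1 := by rw [C_mul_monomial, mul_one]
  rw [this]
  exact J.mul_mem_left _ (key (e 0 + e 1 + e 2 + e 3 - 3) e (by omega))

lemma homog_deg (p : MvPolynomial (Fin 4) ℂ) {n : ℕ} (hp : p.IsHomogeneous n) (e : Fin 4 →₀ ℕ)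
    (he : e ∈ p.support) : e 0 + e 1 + e 2 + e 3 = n := by
  have := hp (mem_support_iff.mp he)
  rw [Finsupp.weight_apply, Finsupp.sum_fintype _ _ (fun i => by simp), Fin.sum_univ_four] at this
  simpa using this

lemma homog_mem_span (p : MvPolynomial (Fin 4) ℂ) {n : ℕ} (hp : p.IsHomogeneous n)
    (N : Submodule ℂ (MvPolynomial (Fin 4) ℂ))
    (h : ∀ (e : Fin 4 →₀ ℕ) (c : ℂ), e 0 + e 1 + e 2 + e 3 = n → monomial e c ∈ N) : p ∈ N := by
  rw [← p.support_sum_monomial_coeff]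
  exact Submodule.sum_mem N (fun e he => h e _ (homog_deg p hp e he))

lemma homog3_mem (p : MvPolynomial (Fin 4) ℂ) (hp : p.IsHomogeneous 3) : p ∈ J := by
  exact homog_mem_span p hp (J.restrictScalars ℂ) (fun e c h => monomial_mem_J c e (by omega))


def deg (m : Fin 4 →₀ ℕ) : ℕ := m 0 + m 1 + m 2 + m 3

lemma fin4_finsupp_eq_iff (s m : Fin 4 →₀ ℕ) :
    s = m ↔ s 0 = m 0 ∧ s 1 = m 1 ∧ s 2 = m 2 ∧ s 3 = m 3 := by
  constructor
  · rintro rfl; exact ⟨rfl, rfl, rfl, rfl⟩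
  · rintro ⟨h0, h1, h2, h3⟩; ext j; fin_cases j <;> assumption

/-- The property satisfied by all elements of J. -/
def P (x : MvPolynomial (Fin 4) ℂ) : Prop :=
  (∀ m, deg m ≤ 1 → coeff m x = 0) ∧
  coeff (Finsupp.single 1 2) x = coeff (Finsupp.single 0 1 + Finsupp.single 3 1) x ∧
  coeff (Finsupp.single 2 2) x = coeff (Finsupp.single 0 1 + Finsupp.single 1 1) x ∧
  coeff (Finsupp.single 3 2) x = coeff (Finsupp.single 0 1 + Finsupp.single 2 1) x

lemma coeff_mul_low (m : Fin 4 →₀ ℕ) (g x : MvPolynomial (Fin 4) ℂ)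
    (hx : ∀ m', deg m' ≤ 1 → coeff m' x = 0) (hm : deg m ≤ 2) :
    coeff m (g * x) = coeff 0 g * coeff m x := by
  rw [coeff_mul]
  rw [Finset.sum_eq_single ((0 : Fin 4 →₀ ℕ), m)]
  · intro p hp hne
    rw [Finset.HasAntidiagonal.mem_antidiagonal] at hp
    by_cases h1 : p.1 = 0
    · exfalso; apply hne; rw [Prod.ext_iff]; constructor
      · exact h1
      · rw [h1, zero_add] at hp; exact hp
    · have hx2 : coeff p.2 x = 0 := by
        apply hx
        obtain ⟨i, hi⟩ := Finsupp.ne_iff.mp h1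
        have e0 := DFunLike.congr_fun hp 0
        have e1 := DFunLike.congr_fun hp 1
        have e2 := DFunLike.congr_fun hp 2
        have e3 := DFunLike.congr_fun hp 3
        simp only [Finsupp.add_apply, Finsupp.coe_zero, Pi.zero_apply] at e0 e1 e2 e3 hi
        have h4 : p.1 0 ≠ 0 ∨ p.1 1 ≠ 0 ∨ p.1 2 ≠ 0 ∨ p.1 3 ≠ 0 := by
          fin_cases i
          · exact Or.inl hi
          · exact Or.inr (Or.inl hi)
          · exact Or.inr (Or.inr (Or.inl hi))
          · exact Or.inr (Or.inr (Or.inr hi))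
        unfold deg at hm ⊢
        rcases h4 with h | h | h | h <;> omega
      rw [hx2, mul_zero]
  · intro h
    exfalso; apply h; rw [Finset.HasAntidiagonal.mem_antidiagonal, zero_add]

lemma P_mul (g x : MvPolynomial (Fin 4) ℂ) (hx : P x) : P (g * x) := by
  obtain ⟨hlow, hr1, hr2, hr3⟩ := hx
  refine ⟨fun m hm => ?_, ?_, ?_, ?_⟩
  · rw [coeff_mul_low m g x hlow (by omega), hlow m hm, mul_zero]
  · rw [coeff_mul_low _ g x hlow (by simp (config := {decide := true}) [deg, Finsupp.single_apply]),
      coeff_mul_low _ g x hlow (by simp (config := {decide := true}) [deg, Finsupp.single_apply, Finsupp.add_apply]), hr1]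
  · rw [coeff_mul_low _ g x hlow (by simp (config := {decide := true}) [deg, Finsupp.single_apply]),
      coeff_mul_low _ g x hlow (by simp (config := {decide := true}) [deg, Finsupp.single_apply, Finsupp.add_apply]), hr2]
  · rw [coeff_mul_low _ g x hlow (by simp (config := {decide := true}) [deg, Finsupp.single_apply]),
      coeff_mul_low _ g x hlow (by simp (config := {decide := true}) [deg, Finsupp.single_apply, Finsupp.add_apply]), hr3]

lemma fmono0 : f₀ = monomial (Finsupp.single 0 2) (1:ℂ) := by rw [f₀, X_pow_eq_monomial]
lemma fmono1 : f₁ = monomial (Finsupp.single 2 1 + Finsupp.single 3 1) (1:ℂ) := by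
  rw [f₁, X, X, monomial_mul, mul_one]
lemma fmono2 : f₂ = monomial (Finsupp.single 3 1 + Finsupp.single 1 1) (1:ℂ) := by
  rw [f₂, X, X, monomial_mul, mul_one]
lemma fmono3 : f₃ = monomial (Finsupp.single 1 1 + Finsupp.single 2 1) (1:ℂ) := by
  rw [f₃, X, X, monomial_mul, mul_one]
lemma fmono4 : f₄ = monomial (Finsupp.single 0 1 + Finsupp.single 3 1) (1:ℂ)
    + monomial (Finsupp.single 1 2) (1:ℂ) := by
  rw [f₄, X, X, monomial_mul, mul_one, X_pow_eq_monomial]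
lemma fmono5 : f₅ = monomial (Finsupp.single 0 1 + Finsupp.single 1 1) (1:ℂ)
    + monomial (Finsupp.single 2 2) (1:ℂ) := by
  rw [f₅, X, X, monomial_mul, mul_one, X_pow_eq_monomial]
lemma fmono6 : f₆ = monomial (Finsupp.single 0 1 + Finsupp.single 2 1) (1:ℂ)
    + monomial (Finsupp.single 3 2) (1:ℂ) := by
  rw [f₆, X, X, monomial_mul, mul_one, X_pow_eq_monomial]

lemma P_gen (f : MvPolynomial (Fin 4) ℂ)
    (hf : f ∈ ({f₀, f₁, f₂, f₃, f₄, f₅, f₆} : Set (MvPolynomial (Fin 4) ℂ))) : P f := by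
  simp only [Set.mem_insert_iff, Set.mem_singleton_iff] at hf
  unfold P deg
  have tac : ∀ (s : Fin 4 →₀ ℕ), deg s = 2 → ∀ m, m 0 + m 1 + m 2 + m 3 ≤ 1 →
      coeff m (monomial s (1:ℂ)) = 0 := by
    intro s hs m hm
    rw [coeff_monomial, if_neg]
    intro h
    rw [fin4_finsupp_eq_iff] at h
    unfold deg at hs
    omega
  rcases hf with rfl | rfl | rfl | rfl | rfl | rfl | rfl
  · rw [fmono0]
    refine ⟨tac _ (by simp (config := {decide := true}) [deg, Finsupp.single_apply]), ?_, ?_, ?_⟩ <;>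
      simp (config := {decide := true}) [coeff_monomial, fin4_finsupp_eq_iff,
        Finsupp.single_apply, Finsupp.add_apply]
  · rw [fmono1]
    refine ⟨tac _ (by simp (config := {decide := true}) [deg, Finsupp.single_apply, Finsupp.add_apply]), ?_, ?_, ?_⟩ <;>
      simp (config := {decide := true}) [coeff_monomial, fin4_finsupp_eq_iff,
        Finsupp.single_apply, Finsupp.add_apply]
  · rw [fmono2]
    refine ⟨tac _ (by simp (config := {decide := true}) [deg, Finsupp.single_apply, Finsupp.add_apply]), ?_, ?_, ?_⟩ <;>
      simp (config := {decide := true}) [coeff_monomial, fin4_finsupp_eq_iff,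
        Finsupp.single_apply, Finsupp.add_apply]
  · rw [fmono3]
    refine ⟨tac _ (by simp (config := {decide := true}) [deg, Finsupp.single_apply, Finsupp.add_apply]), ?_, ?_, ?_⟩ <;>
      simp (config := {decide := true}) [coeff_monomial, fin4_finsupp_eq_iff,
        Finsupp.single_apply, Finsupp.add_apply]
  · rw [fmono4]
    refine ⟨fun m hm => ?_, ?_, ?_, ?_⟩
    · rw [coeff_add, tac _ (by simp (config := {decide := true}) [deg, Finsupp.single_apply, Finsupp.add_apply]) m hm,
        tac _ (by simp (config := {decide := true}) [deg, Finsupp.single_apply]) m hm, add_zero]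
    all_goals simp (config := {decide := true}) [coeff_monomial, fin4_finsupp_eq_iff,
        Finsupp.single_apply, Finsupp.add_apply]
  · rw [fmono5]
    refine ⟨fun m hm => ?_, ?_, ?_, ?_⟩
    · rw [coeff_add, tac _ (by simp (config := {decide := true}) [deg, Finsupp.single_apply, Finsupp.add_apply]) m hm,
        tac _ (by simp (config := {decide := true}) [deg, Finsupp.single_apply]) m hm, add_zero]
    all_goals simp (config := {decide := true}) [coeff_monomial, fin4_finsupp_eq_iff,
        Finsupp.single_apply, Finsupp.add_apply]
  · rw [fmono6]
    refine ⟨fun m hm => ?_, ?_, ?_, ?_⟩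
    · rw [coeff_add, tac _ (by simp (config := {decide := true}) [deg, Finsupp.single_apply, Finsupp.add_apply]) m hm,
        tac _ (by simp (config := {decide := true}) [deg, Finsupp.single_apply]) m hm, add_zero]
    all_goals simp (config := {decide := true}) [coeff_monomial, fin4_finsupp_eq_iff,
        Finsupp.single_apply, Finsupp.add_apply]

lemma P_of_mem_J (x : MvPolynomial (Fin 4) ℂ) (hx : x ∈ J) : P x := by
  refine Submodule.span_induction (fun f hf => P_gen f hf) ?_ ?_ ?_ hx
  · exact ⟨fun m _ => by simp, by simp, by simp, by simp⟩
  · intro a b _ _ ha hb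
    obtain ⟨ha1, ha2, ha3, ha4⟩ := ha
    obtain ⟨hb1, hb2, hb3, hb4⟩ := hb
    refine ⟨fun m hm => ?_, ?_, ?_, ?_⟩ <;> simp only [coeff_add]
    · rw [ha1 m hm, hb1 m hm, add_zero]
    · rw [ha2, hb2]
    · rw [ha3, hb3]
    · rw [ha4, hb4]
  · intro g a _ ha
    exact P_mul g a ha

-- ## Part 4: basis of the quotient

noncomputable def bb : Fin 8 → MvPolynomial (Fin 4) ℂ
  | 0 => 1
  | 1 => X 0
  | 2 => X 1
  | 3 => X 2
  | 4 => X 3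
  | 5 => X 1 ^ 2
  | 6 => X 2 ^ 2
  | 7 => X 3 ^ 2

noncomputable def mkJ : MvPolynomial (Fin 4) ℂ →+* MvPolynomial (Fin 4) ℂ ⧸ J :=
  Ideal.Quotient.mk J

lemma mkJ_C_mul (c : ℂ) (y : MvPolynomial (Fin 4) ℂ) : mkJ (C c * y) = c • mkJ y := by
  rw [← MvPolynomial.smul_eq_C_mul]
  exact map_smul (Ideal.Quotient.mkₐ ℂ J).toLinearMap c y

lemma one_not_mem_J : (1 : MvPolynomial (Fin 4) ℂ) ∉ J := by
  intro h
  have := (P_of_mem_J 1 h).1 0 (by simp [deg])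
  simp at this

lemma bb_indep : LinearIndependent ℂ (fun i => mkJ (bb i)) := by
  rw [Fintype.linearIndependent_iff]
  intro g hg
  set q : MvPolynomial (Fin 4) ℂ := ∑ i, C (g i) * bb i with hq
  have hmk : mkJ q = ∑ i, g i • mkJ (bb i) := by
    rw [hq, map_sum]
    exact Finset.sum_congr rfl (fun i _ => mkJ_C_mul (g i) (bb i))
  have hqJ : q ∈ J := by
    exact Ideal.Quotient.eq_zero_iff_mem.mp (hmk.trans hg)
  have hP := P_of_mem_J q hqJ
  have hqe : q = C (g 0) * 1 + C (g 1) * X 0 + C (g 2) * X 1 + C (g 3) * X 2 + C (g 4) * X 3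
      + C (g 5) * X 1 ^ 2 + C (g 6) * X 2 ^ 2 + C (g 7) * X 3 ^ 2 := by
    rw [hq, Fin.sum_univ_eight,
      show bb 0 = 1 from rfl, show bb 1 = X 0 from rfl, show bb 2 = X 1 from rfl,
      show bb 3 = X 2 from rfl, show bb 4 = X 3 from rfl, show bb 5 = X 1 ^ 2 from rfl,
      show bb 6 = X 2 ^ 2 from rfl, show bb 7 = X 3 ^ 2 from rfl]
  have hco : ∀ m : Fin 4 →₀ ℕ, coeff m q =
      g 0 * (if 0 = m then 1 else 0) + g 1 * (if Finsupp.single 0 1 = m then 1 else 0)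
      + g 2 * (if Finsupp.single 1 1 = m then 1 else 0) + g 3 * (if Finsupp.single 2 1 = m then 1 else 0)
      + g 4 * (if Finsupp.single 3 1 = m then 1 else 0) + g 5 * (if Finsupp.single 1 2 = m then 1 else 0)
      + g 6 * (if Finsupp.single 2 2 = m then 1 else 0) + g 7 * (if Finsupp.single 3 2 = m then 1 else 0) := by
    intro m
    rw [hqe]
    simp only [coeff_add, coeff_C_mul, X_pow_eq_monomial, coeff_monomial, coeff_X', coeff_one,
      mul_one]
    norm_num
  have e0 : g 0 = 0 := by
    have h := hP.1 0 (by simp [deg])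
    rw [hco 0] at h
    simpa (config := {decide := true}) [fin4_finsupp_eq_iff, Finsupp.single_apply] using h
  have e1 : g 1 = 0 := by
    have h := hP.1 (Finsupp.single 0 1) (by simp (config := {decide := true}) [deg, Finsupp.single_apply])
    rw [hco _] at h
    simpa (config := {decide := true}) [fin4_finsupp_eq_iff, Finsupp.single_apply] using h
  have e2 : g 2 = 0 := by
    have h := hP.1 (Finsupp.single 1 1) (by simp (config := {decide := true}) [deg, Finsupp.single_apply])
    rw [hco _] at h
    simpa (config := {decide := true}) [fin4_finsupp_eq_iff, Finsupp.single_apply] using h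
  have e3 : g 3 = 0 := by
    have h := hP.1 (Finsupp.single 2 1) (by simp (config := {decide := true}) [deg, Finsupp.single_apply])
    rw [hco _] at h
    simpa (config := {decide := true}) [fin4_finsupp_eq_iff, Finsupp.single_apply] using h
  have e4 : g 4 = 0 := by
    have h := hP.1 (Finsupp.single 3 1) (by simp (config := {decide := true}) [deg, Finsupp.single_apply])
    rw [hco _] at h
    simpa (config := {decide := true}) [fin4_finsupp_eq_iff, Finsupp.single_apply] using h
  have e5 : g 5 = 0 := by
    have h := hP.2.1
    rw [hco _, hco _] at h
    simpa (config := {decide := true}) [fin4_finsupp_eq_iff, Finsupp.single_apply, Finsupp.add_apply] using h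
  have e6 : g 6 = 0 := by
    have h := hP.2.2.1
    rw [hco _, hco _] at h
    simpa (config := {decide := true}) [fin4_finsupp_eq_iff, Finsupp.single_apply, Finsupp.add_apply] using h
  have e7 : g 7 = 0 := by
    have h := hP.2.2.2
    rw [hco _, hco _] at h
    simpa (config := {decide := true}) [fin4_finsupp_eq_iff, Finsupp.single_apply, Finsupp.add_apply] using h
  intro i
  fin_cases i <;> assumption

noncomputable def bigSpan : Submodule ℂ (MvPolynomial (Fin 4) ℂ ⧸ J) :=
  Submodule.span ℂ (Set.range (fun i => mkJ (bb i)))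

lemma mk_bb_mem (k : Fin 8) : mkJ (bb k) ∈ bigSpan := Submodule.subset_span ⟨k, rfl⟩

lemma mk_zero_of_mem {y : MvPolynomial (Fin 4) ℂ} (hy : y ∈ J) : mkJ y = 0 :=
  Ideal.Quotient.eq_zero_iff_mem.mpr hy

lemma monomial_mk_mem_bigSpan (e : Fin 4 →₀ ℕ) (c : ℂ) : mkJ (monomial e c) ∈ bigSpan := by
  by_cases h3 : 3 ≤ e 0 + e 1 + e 2 + e 3
  · rw [mk_zero_of_mem (monomial_mem_J c e h3)]
    exact bigSpan.zero_mem
  · have hm : (monomial e c) = C c * (X 0 ^ e 0 * X 1 ^ e 1 * X 2 ^ e 2 * X 3 ^ e 3) := by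
      rw [monomial_eq, Finsupp.prod_fintype _ _ (fun i => pow_zero _), Fin.prod_univ_four]
    rw [hm, mkJ_C_mul]
    apply bigSpan.smul_mem
    set a := e 0; set b := e 1; set c2 := e 2; set d := e 3
    clear_value a b c2 d
    have ha : a ≤ 2 := by omega
    have hb : b ≤ 2 := by omega
    have hc : c2 ≤ 2 := by omega
    have hd : d ≤ 2 := by omega
    have hs : a + b + c2 + d ≤ 2 := by omega
    clear h3 hm
    have bbel : ∀ (k : Fin 8) (y : MvPolynomial (Fin 4) ℂ), y = bb k → mkJ y ∈ bigSpan :=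
      fun k y h => h ▸ mk_bb_mem k
    interval_cases a <;> interval_cases b <;> interval_cases c2 <;> interval_cases d <;>
      first
      | omega
      | (refine bbel 0 _ ?_; show _ = (1 : MvPolynomial (Fin 4) ℂ); ring1)
      | (refine bbel 1 _ ?_; show _ = (X 0 : MvPolynomial (Fin 4) ℂ); ring1)
      | (refine bbel 2 _ ?_; show _ = (X 1 : MvPolynomial (Fin 4) ℂ); ring1)
      | (refine bbel 3 _ ?_; show _ = (X 2 : MvPolynomial (Fin 4) ℂ); ring1)
      | (refine bbel 4 _ ?_; show _ = (X 3 : MvPolynomial (Fin 4) ℂ); ring1)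
      | (refine bbel 5 _ ?_; show _ = (X 1 ^ 2 : MvPolynomial (Fin 4) ℂ); ring1)
      | (refine bbel 6 _ ?_; show _ = (X 2 ^ 2 : MvPolynomial (Fin 4) ℂ); ring1)
      | (refine bbel 7 _ ?_; show _ = (X 3 ^ 2 : MvPolynomial (Fin 4) ℂ); ring1)
      | (rw [show (X 0 ^ 2 * X 1 ^ 0 * X 2 ^ 0 * X 3 ^ 0 : MvPolynomial (Fin 4) ℂ) = f₀ from by
            simp only [f₀]; ring, mk_zero_of_mem hJ0]; exact bigSpan.zero_mem)
      | (rw [show (X 0 ^ 0 * X 1 ^ 0 * X 2 ^ 1 * X 3 ^ 1 : MvPolynomial (Fin 4) ℂ) = f₁ from by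
            simp only [f₁]; ring, mk_zero_of_mem hJ1]; exact bigSpan.zero_mem)
      | (rw [show (X 0 ^ 0 * X 1 ^ 1 * X 2 ^ 0 * X 3 ^ 1 : MvPolynomial (Fin 4) ℂ) = f₂ from by
            simp only [f₂]; ring, mk_zero_of_mem hJ2]; exact bigSpan.zero_mem)
      | (rw [show (X 0 ^ 0 * X 1 ^ 1 * X 2 ^ 1 * X 3 ^ 0 : MvPolynomial (Fin 4) ℂ) = f₃ from by
            simp only [f₃]; ring, mk_zero_of_mem hJ3]; exact bigSpan.zero_mem)
      | (rw [show (X 0 ^ 1 * X 1 ^ 0 * X 2 ^ 0 * X 3 ^ 1 : MvPolynomial (Fin 4) ℂ) = f₄ - X 1 ^ 2 from by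
            simp only [f₄]; ring, map_sub, mk_zero_of_mem hJ4, zero_sub]
         exact bigSpan.neg_mem (mk_bb_mem 5))
      | (rw [show (X 0 ^ 1 * X 1 ^ 1 * X 2 ^ 0 * X 3 ^ 0 : MvPolynomial (Fin 4) ℂ) = f₅ - X 2 ^ 2 from by
            simp only [f₅]; ring, map_sub, mk_zero_of_mem hJ5, zero_sub]
         exact bigSpan.neg_mem (mk_bb_mem 6))
      | (rw [show (X 0 ^ 1 * X 1 ^ 0 * X 2 ^ 1 * X 3 ^ 0 : MvPolynomial (Fin 4) ℂ) = f₆ - X 3 ^ 2 from by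
            simp only [f₆]; ring, map_sub, mk_zero_of_mem hJ6, zero_sub]
         exact bigSpan.neg_mem (mk_bb_mem 7))

lemma bigSpan_top : bigSpan = ⊤ := by
  rw [eq_top_iff]
  rintro z -
  obtain ⟨p, rfl⟩ := Ideal.Quotient.mk_surjective z
  show mkJ p ∈ bigSpan
  rw [show p = ∑ v ∈ p.support, (monomial v) (coeff v p) from p.support_sum_monomial_coeff.symm,
    map_sum]
  exact Submodule.sum_mem _ (fun e _ => monomial_mk_mem_bigSpan e _)

noncomputable def quotBasis : Module.Basis (Fin 8) ℂ (MvPolynomial (Fin 4) ℂ ⧸ J) :=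
  Module.Basis.mk bb_indep (show ⊤ ≤ bigSpan from bigSpan_top.ge)

lemma finrank_quot : Module.finrank ℂ (MvPolynomial (Fin 4) ℂ ⧸ J) = 8 := by
  rw [Module.finrank_eq_card_basis quotBasis, Fintype.card_fin]

-- ## Part 5: graded pieces

lemma mem_quotPart {n : ℕ} {z : MvPolynomial (Fin 4) ℂ ⧸ J} :
    z ∈ quotPart n ↔ ∃ p : MvPolynomial (Fin 4) ℂ, p.IsHomogeneous n ∧ mkJ p = z := by
  simp only [quotPart, Submodule.mem_map, mem_homogeneousSubmodule]
  constructor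
  · rintro ⟨p, hp, rfl⟩; exact ⟨p, hp, rfl⟩
  · rintro ⟨p, hp, rfl⟩; exact ⟨p, hp, rfl⟩

lemma mk_homog_mem {n : ℕ} (p : MvPolynomial (Fin 4) ℂ) (hp : p.IsHomogeneous n)
    (N : Submodule ℂ (MvPolynomial (Fin 4) ℂ ⧸ J))
    (h : ∀ (e : Fin 4 →₀ ℕ) (c : ℂ), e 0 + e 1 + e 2 + e 3 = n → mkJ (monomial e c) ∈ N) :
    mkJ p ∈ N := by
  rw [show p = ∑ v ∈ p.support, (monomial v) (coeff v p) from p.support_sum_monomial_coeff.symm,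
    map_sum]
  exact Submodule.sum_mem N (fun e he => h e _ (homog_deg p hp e he))

lemma quotPart0 : quotPart 0 = Submodule.span ℂ {mkJ 1} := by
  apply le_antisymm
  · rintro z hz
    obtain ⟨p, hp, rfl⟩ := mem_quotPart.mp hz
    refine mk_homog_mem p hp _ (fun e c he => ?_)
    have he0 : e = 0 := by
      rw [fin4_finsupp_eq_iff]
      simp only [Finsupp.coe_zero, Pi.zero_apply]
      omega
    rw [he0, show (monomial (0 : Fin 4 →₀ ℕ) c) = C c * 1 from by rw [mul_one, C_apply],
      mkJ_C_mul]
    exact Submodule.smul_mem _ c (Submodule.mem_span_singleton_self _)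
  · rw [Submodule.span_le, Set.singleton_subset_iff]
    exact mem_quotPart.mpr ⟨1, isHomogeneous_one _ _, rfl⟩

lemma mkJ_one_ne_zero : mkJ (1 : MvPolynomial (Fin 4) ℂ) ≠ 0 := by
  intro h
  exact one_not_mem_J (Ideal.Quotient.eq_zero_iff_mem.mp h)

lemma finrank_quotPart0 : Module.finrank ℂ (quotPart 0) = 1 := by
  rw [quotPart0]
  exact finrank_span_singleton mkJ_one_ne_zero

def emb1 : Fin 4 → Fin 8 := ![1, 2, 3, 4]
def emb2 : Fin 3 → Fin 8 := ![5, 6, 7]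

lemma quotPart1 : quotPart 1 = Submodule.span ℂ (Set.range ((fun i => mkJ (bb i)) ∘ emb1)) := by
  apply le_antisymm
  · rintro z hz
    obtain ⟨p, hp, rfl⟩ := mem_quotPart.mp hz
    refine mk_homog_mem p hp _ (fun e c he => ?_)
    have spel : ∀ (i : Fin 4) (y : MvPolynomial (Fin 4) ℂ), y = bb (emb1 i) →
        mkJ y ∈ Submodule.span ℂ (Set.range ((fun i => mkJ (bb i)) ∘ emb1)) :=
      fun i y h => h ▸ Submodule.subset_span ⟨i, rfl⟩
    have hm : (monomial e c) = C c * (X 0 ^ e 0 * X 1 ^ e 1 * X 2 ^ e 2 * X 3 ^ e 3) := by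
      rw [monomial_eq, Finsupp.prod_fintype _ _ (fun i => pow_zero _), Fin.prod_univ_four]
    rw [hm, mkJ_C_mul]
    apply Submodule.smul_mem
    set a := e 0; set b := e 1; set c2 := e 2; set d := e 3
    clear_value a b c2 d
    have ha : a ≤ 1 := by omega
    have hb : b ≤ 1 := by omega
    have hc : c2 ≤ 1 := by omega
    have hd : d ≤ 1 := by omega
    interval_cases a <;> interval_cases b <;> interval_cases c2 <;> interval_cases d <;>
      first
      | omega
      | (refine spel 0 _ ?_; show _ = (X 0 : MvPolynomial (Fin 4) ℂ); ring1)
      | (refine spel 1 _ ?_; show _ = (X 1 : MvPolynomial (Fin 4) ℂ); ring1)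
      | (refine spel 2 _ ?_; show _ = (X 2 : MvPolynomial (Fin 4) ℂ); ring1)
      | (refine spel 3 _ ?_; show _ = (X 3 : MvPolynomial (Fin 4) ℂ); ring1)
  · rw [Submodule.span_le]
    rintro z ⟨i, rfl⟩
    fin_cases i
    · exact mem_quotPart.mpr ⟨X 0, isHomogeneous_X _ _, rfl⟩
    · exact mem_quotPart.mpr ⟨X 1, isHomogeneous_X _ _, rfl⟩
    · exact mem_quotPart.mpr ⟨X 2, isHomogeneous_X _ _, rfl⟩
    · exact mem_quotPart.mpr ⟨X 3, isHomogeneous_X _ _, rfl⟩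

lemma finrank_quotPart1 : Module.finrank ℂ (quotPart 1) = 4 := by
  rw [quotPart1, finrank_span_eq_card (bb_indep.comp emb1 (by decide)), Fintype.card_fin]

lemma homogSq (i : Fin 4) : (X i ^ 2 : MvPolynomial (Fin 4) ℂ).IsHomogeneous 2 := by
  simpa using (isHomogeneous_X ℂ i).pow 2

lemma quotPart2 : quotPart 2 = Submodule.span ℂ (Set.range ((fun i => mkJ (bb i)) ∘ emb2)) := by
  apply le_antisymm
  · rintro z hz
    obtain ⟨p, hp, rfl⟩ := mem_quotPart.mp hz
    refine mk_homog_mem p hp _ (fun e c he => ?_)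
    have spel : ∀ (i : Fin 3) (y : MvPolynomial (Fin 4) ℂ), y = bb (emb2 i) →
        mkJ y ∈ Submodule.span ℂ (Set.range ((fun i => mkJ (bb i)) ∘ emb2)) :=
      fun i y h => h ▸ Submodule.subset_span ⟨i, rfl⟩
    have hm : (monomial e c) = C c * (X 0 ^ e 0 * X 1 ^ e 1 * X 2 ^ e 2 * X 3 ^ e 3) := by
      rw [monomial_eq, Finsupp.prod_fintype _ _ (fun i => pow_zero _), Fin.prod_univ_four]
    rw [hm, mkJ_C_mul]
    apply Submodule.smul_mem
    set a := e 0; set b := e 1; set c2 := e 2; set d := e 3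
    clear_value a b c2 d
    have ha : a ≤ 2 := by omega
    have hb : b ≤ 2 := by omega
    have hc : c2 ≤ 2 := by omega
    have hd : d ≤ 2 := by omega
    interval_cases a <;> interval_cases b <;> interval_cases c2 <;> interval_cases d <;>
      first
      | omega
      | (refine spel 0 _ ?_; show _ = (X 1 ^ 2 : MvPolynomial (Fin 4) ℂ); ring1)
      | (refine spel 1 _ ?_; show _ = (X 2 ^ 2 : MvPolynomial (Fin 4) ℂ); ring1)
      | (refine spel 2 _ ?_; show _ = (X 3 ^ 2 : MvPolynomial (Fin 4) ℂ); ring1)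
      | (rw [show (X 0 ^ 2 * X 1 ^ 0 * X 2 ^ 0 * X 3 ^ 0 : MvPolynomial (Fin 4) ℂ) = f₀ from by
            simp only [f₀]; ring, mk_zero_of_mem hJ0]; exact Submodule.zero_mem _)
      | (rw [show (X 0 ^ 0 * X 1 ^ 0 * X 2 ^ 1 * X 3 ^ 1 : MvPolynomial (Fin 4) ℂ) = f₁ from by
            simp only [f₁]; ring, mk_zero_of_mem hJ1]; exact Submodule.zero_mem _)
      | (rw [show (X 0 ^ 0 * X 1 ^ 1 * X 2 ^ 0 * X 3 ^ 1 : MvPolynomial (Fin 4) ℂ) = f₂ from by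
            simp only [f₂]; ring, mk_zero_of_mem hJ2]; exact Submodule.zero_mem _)
      | (rw [show (X 0 ^ 0 * X 1 ^ 1 * X 2 ^ 1 * X 3 ^ 0 : MvPolynomial (Fin 4) ℂ) = f₃ from by
            simp only [f₃]; ring, mk_zero_of_mem hJ3]; exact Submodule.zero_mem _)
      | (rw [show (X 0 ^ 1 * X 1 ^ 0 * X 2 ^ 0 * X 3 ^ 1 : MvPolynomial (Fin 4) ℂ) = f₄ - X 1 ^ 2 from by
            simp only [f₄]; ring, map_sub, mk_zero_of_mem hJ4, zero_sub]
         exact Submodule.neg_mem _ (spel 0 _ rfl))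
      | (rw [show (X 0 ^ 1 * X 1 ^ 1 * X 2 ^ 0 * X 3 ^ 0 : MvPolynomial (Fin 4) ℂ) = f₅ - X 2 ^ 2 from by
            simp only [f₅]; ring, map_sub, mk_zero_of_mem hJ5, zero_sub]
         exact Submodule.neg_mem _ (spel 1 _ rfl))
      | (rw [show (X 0 ^ 1 * X 1 ^ 0 * X 2 ^ 1 * X 3 ^ 0 : MvPolynomial (Fin 4) ℂ) = f₆ - X 3 ^ 2 from by
            simp only [f₆]; ring, map_sub, mk_zero_of_mem hJ6, zero_sub]
         exact Submodule.neg_mem _ (spel 2 _ rfl))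
  · rw [Submodule.span_le]
    rintro z ⟨i, rfl⟩
    fin_cases i
    · exact mem_quotPart.mpr ⟨X 1 ^ 2, homogSq 1, rfl⟩
    · exact mem_quotPart.mpr ⟨X 2 ^ 2, homogSq 2, rfl⟩
    · exact mem_quotPart.mpr ⟨X 3 ^ 2, homogSq 3, rfl⟩

lemma finrank_quotPart2 : Module.finrank ℂ (quotPart 2) = 3 := by
  rw [quotPart2, finrank_span_eq_card (bb_indep.comp emb2 (by decide)), Fintype.card_fin]

lemma quotPart_bot (n : ℕ) (hn : 3 ≤ n) : quotPart n = ⊥ := by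
  rw [eq_bot_iff]
  rintro z hz
  obtain ⟨p, hp, rfl⟩ := mem_quotPart.mp hz
  refine mk_homog_mem p hp ⊥ (fun e c he => ?_)
  rw [mk_zero_of_mem (monomial_mem_J c e (by omega))]
  exact Submodule.zero_mem _

/-- J contains every homogeneous polynomial of degree 3, the
quotient S/J is an 8-dimensional ℂ-vector space, and its Hilbert function is
(1, 4, 3, 0, 0, …). -/
theorem quotient_by_J :
    (∀ p : MvPolynomial (Fin 4) ℂ, p.IsHomogeneous 3 → p ∈ J) ∧
    Module.finrank ℂ (MvPolynomial (Fin 4) ℂ ⧸ J) = 8 ∧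
    Module.finrank ℂ (quotPart 0) = 1 ∧
    Module.finrank ℂ (quotPart 1) = 4 ∧
    Module.finrank ℂ (quotPart 2) = 3 ∧
    (∀ n : ℕ, 3 ≤ n → quotPart n = ⊥) := by
  exact ⟨homog3_mem, finrank_quot, finrank_quotPart0, finrank_quotPart1, finrank_quotPart2,
    quotPart_bot⟩

end
end
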